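/- arXiv:1810.06354 — 2 statements merged into one kernel-verified Lean document; each statement's English description precedes it below -/
import Mathlib

section
/- For every integer m ≥ 1, the independence number of the pair graph of the fan graph F_{m,1} equals the independence number of the pair graph of the path P_m plus 1; equivalently α(C(F_{m,1})) = ⌊(m+1)²/4⌋ + 1 for m ≥ 3. -/
/-!
An independent set of `C(G)` is a symmetric relation on `V(G)` whose rows `{x | {c, x} ∈ S}` are
independent in `G`. For the path `P_m`, within an independent set a pair `{a, b}` with `a ≤ b` is
determined by `b` and `⌊a/2⌋`, which bounds its size by `∑_{b < m} (⌊b/2⌋ + 1) = ⌊(m+1)²/4⌋`; the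
pairs of equal parity attain this. For a join `G + K₁`, turning each spoke `{x, hub}` of an
independent set into the loop `{x, x}` leaves an independent set of `C(G)` plus at most the single
pair `{hub, hub}`.
-/

/-- The independence number of a graph: the supremum of sizes of independent sets. -/
noncomputable def indepNum {V : Type*} (G : SimpleGraph V) : ℕ :=
  sSup {n | ∃ s : Finset V, s.card = n ∧ ∀ a ∈ s, ∀ b ∈ s, ¬ G.Adj a b}

/-- The path graph on `n` vertices `0, 1, ..., n-1`. -/
def pathG (n : ℕ) : SimpleGraph (Fin n) :=
  SimpleGraph.fromRel (fun i j => (i : ℕ) + 1 = (j : ℕ))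

/-- The cycle graph on `n` vertices `0, 1, ..., n-1`. -/
def cycleG (n : ℕ) : SimpleGraph (Fin n) :=
  SimpleGraph.fromRel (fun i j => (i : ℕ) + 1 = (j : ℕ) ∨ ((i : ℕ) = 0 ∧ (j : ℕ) = n - 1))

/-- The join of a graph `G` with a single extra vertex. -/
def joinK1 {V : Type*} (G : SimpleGraph V) : SimpleGraph (V ⊕ Unit) :=
  SimpleGraph.fromRel (fun a b =>
    (∃ x y, G.Adj x y ∧ a = Sum.inl x ∧ b = Sum.inl y) ∨ (a.isLeft ∧ b.isRight))

/-- The fan graph `F_{m,1} = P_m + K_1`. -/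
def fanG (m : ℕ) : SimpleGraph (Fin m ⊕ Unit) := joinK1 (pathG m)

/-- The wheel graph `W_{m,1} = C_m + K_1`. -/
def wheelG (m : ℕ) : SimpleGraph (Fin m ⊕ Unit) := joinK1 (cycleG m)

/-- The `k`-token graph: vertices are `k`-subsets of `V(G)`, two subsets adjacent
whenever their symmetric difference is an edge of `G`. -/
def tokenGraph {V : Type*} [DecidableEq V] (k : ℕ) (G : SimpleGraph V) :
    SimpleGraph {A : Finset V // A.card = k} :=
  SimpleGraph.fromRel (fun A B => ∃ a b : V, G.Adj a b ∧ symmDiff A.1 B.1 = {a, b})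

/-- The double vertex graph `G^(2)`: the `2`-token graph of `G`. -/
def doubleVertexGraph {V : Type*} [DecidableEq V] (G : SimpleGraph V) :
    SimpleGraph {A : Finset V // A.card = 2} :=
  tokenGraph 2 G

/-- The pair graph (complete double vertex graph) `C(G)`: vertices are the 2-multisets
of `V(G)`; `{a,x}` and `{a,y}` (distinct) are adjacent iff `x` and `y` are adjacent in `G`. -/
def pairGraph {V : Type*} (G : SimpleGraph V) : SimpleGraph (Sym2 V) :=
  SimpleGraph.fromRel (fun s t => ∃ a x y : V, G.Adj x y ∧ s = Sym2.mk a x ∧ t = Sym2.mk a y)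

open Finset

namespace SimpleGraph

variable {V : Type*} {G : SimpleGraph V}

lemma isIndepSet_iff_forall_not_adj {s : Set V} :
    G.IsIndepSet s ↔ ∀ a ∈ s, ∀ b ∈ s, ¬ G.Adj a b :=
  ⟨fun h _ ha _ hb hab => h ha hb hab.ne hab, fun h _ ha _ hb _ => h _ ha _ hb⟩

end SimpleGraph

lemma Sym2.mk_inf_sup {α : Type*} [LinearOrder α] (z : Sym2 α) : s(z.inf, z.sup) = z :=
  Sym2.sortEquiv.symm_apply_apply z

lemma indepNum_eq_graph_indepNum {V : Type*} (G : SimpleGraph V) :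
    indepNum G = G.indepNum := by
  simp only [indepNum, SimpleGraph.indepNum, SimpleGraph.isNIndepSet_iff,
    SimpleGraph.isIndepSet_iff_forall_not_adj, mem_coe, and_comm]

section PairGraph

variable {V : Type*} {G : SimpleGraph V}

lemma pairGraph_adj_mk (c : V) {x y : V} (h : G.Adj x y) :
    (pairGraph G).Adj s(c, x) s(c, y) :=
  ⟨fun he => h.ne (Sym2.congr_right.mp he), Or.inl ⟨c, x, y, h, rfl, rfl⟩⟩

lemma isIndepSet_pairGraph_iff {S : Set (Sym2 V)} :
    (pairGraph G).IsIndepSet S ↔ ∀ c x y, s(c, x) ∈ S → s(c, y) ∈ S → ¬ G.Adj x y := by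
  rw [SimpleGraph.isIndepSet_iff_forall_not_adj]
  constructor
  · exact fun h c x y hx hy hxy => h _ hx _ hy (pairGraph_adj_mk c hxy)
  · rintro h z hz w hw ⟨-, ⟨c, x, y, hxy, rfl, rfl⟩ | ⟨c, x, y, hxy, rfl, rfl⟩⟩
    · exact h c x y hz hw hxy
    · exact h c x y hw hz hxy

end PairGraph

section Join

variable {V : Type*} {G : SimpleGraph V}

lemma joinK1_adj_inl_inl {x y : V} : (joinK1 G).Adj (.inl x) (.inl y) ↔ G.Adj x y := by
  simpa [joinK1, G.adj_comm y x] using fun h : G.Adj x y => h.ne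

lemma joinK1_adj_inl_inr (x : V) (u : Unit) : (joinK1 G).Adj (.inl x) (.inr u) := by
  simp [joinK1]

lemma exists_of_map_inl_eq_mk {z : Sym2 V} {c x : V ⊕ Unit}
    (h : Sym2.map Sum.inl z = s(c, x)) : ∃ a b, c = .inl a ∧ x = .inl b ∧ z = s(a, b) := by
  induction z using Sym2.ind with
  | _ a b =>
    rcases Sym2.eq_iff.mp h with ⟨rfl, rfl⟩ | ⟨rfl, rfl⟩
    · exact ⟨a, b, rfl, rfl, rfl⟩
    · exact ⟨b, a, rfl, rfl, Sym2.eq_swap⟩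

lemma add_one_le_indepNum_pairGraph_joinK1 [Finite V] :
    (pairGraph G).indepNum + 1 ≤ (pairGraph (joinK1 G)).indepNum := by
  classical
  obtain ⟨S, hS, hcard⟩ := (pairGraph G).exists_isNIndepSet_indepNum
  rw [isIndepSet_pairGraph_iff] at hS
  set hub : Sym2 (V ⊕ Unit) := s(.inr (), .inr ())
  set T : Finset (Sym2 (V ⊕ Unit)) := insert hub (S.image (Sym2.map Sum.inl))
  have eq_hub {u v : V ⊕ Unit} (h : s(u, v) = hub) : u = .inr () ∧ v = .inr () := by
    simpa [hub] using h
  have hub_notMem : hub ∉ S.image (Sym2.map Sum.inl) := fun h => by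
    obtain ⟨z, -, hz⟩ := mem_image.mp h
    obtain ⟨a, b, h, -⟩ := exists_of_map_inl_eq_mk hz
    cases h
  have hT : (pairGraph (joinK1 G)).IsIndepSet (T : Set (Sym2 (V ⊕ Unit))) := by
    rw [isIndepSet_pairGraph_iff]
    intro c x y hx hy hxy
    simp only [T, mem_coe, mem_insert, mem_image] at hx hy
    rcases hx with hx | ⟨z, hz, hx⟩ <;> rcases hy with hy | ⟨w, hw, hy⟩
    · obtain ⟨-, rfl⟩ := eq_hub hx
      obtain ⟨-, rfl⟩ := eq_hub hy
      exact hxy.ne rfl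
    · obtain ⟨rfl, -⟩ := eq_hub hx
      obtain ⟨a, b, h, -⟩ := exists_of_map_inl_eq_mk hy
      cases h
    · obtain ⟨rfl, -⟩ := eq_hub hy
      obtain ⟨a, b, h, -⟩ := exists_of_map_inl_eq_mk hx
      cases h
    · obtain ⟨a, b, rfl, rfl, rfl⟩ := exists_of_map_inl_eq_mk hx
      obtain ⟨a', b', ha', rfl, rfl⟩ := exists_of_map_inl_eq_mk hy
      cases ha'
      exact hS a b b' hz hw (joinK1_adj_inl_inl.mp hxy)
  calc (pairGraph G).indepNum + 1 = T.card := by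
        rw [card_insert_of_notMem hub_notMem,
          card_image_of_injective _ (Sym2.map.injective Sum.inl_injective), hcard]
    _ ≤ _ := hT.card_le_indepNum

lemma card_le_card_inl_add_card_spokes_add_one [Fintype V] [DecidableEq V]
    (T : Finset (Sym2 (V ⊕ Unit))) :
    T.card ≤ (univ.filter fun z : Sym2 V => Sym2.map Sum.inl z ∈ T).card +
      (univ.filter fun a : V => s(.inl a, .inr ()) ∈ T).card + 1 := by
  set S := univ.filter fun z : Sym2 V => Sym2.map Sum.inl z ∈ T
  set A := univ.filter fun a : V => s(.inl a, .inr ()) ∈ T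
  have hcover : T ⊆ S.image (Sym2.map Sum.inl) ∪ A.image (fun a => s(.inl a, .inr ())) ∪
      {s(.inr (), .inr ())} := by
    intro z hz
    induction z using Sym2.ind with
    | _ u v =>
      rcases u with a | ⟨⟨⟩⟩ <;> rcases v with b | ⟨⟨⟩⟩
      · exact mem_union_left _ <| mem_union_left _ <| mem_image.mpr ⟨s(a, b), by simpa [S], rfl⟩
      · simp [A, hz]
      · rw [Sym2.eq_swap] at hz
        simp [A, hz]
      · simp
  grw [card_le_card hcover, card_union_le, card_union_le, card_image_le, card_image_le,
    card_singleton]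

lemma indepNum_pairGraph_joinK1_le [Finite V] :
    (pairGraph (joinK1 G)).indepNum ≤ (pairGraph G).indepNum + 1 := by
  classical
  have := Fintype.ofFinite V
  obtain ⟨T, hT, hcard⟩ := (pairGraph (joinK1 G)).exists_isNIndepSet_indepNum
  rw [isIndepSet_pairGraph_iff] at hT
  set S := univ.filter fun z : Sym2 V => Sym2.map Sum.inl z ∈ T
  set A := univ.filter fun a : V => s(.inl a, .inr ()) ∈ T
  have hdisj : Disjoint S (A.image Sym2.diag) := by
    refine disjoint_right.mpr fun z hz hzS => ?_
    obtain ⟨a, ha, rfl⟩ := mem_image.mp hz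
    simp only [S, A, mem_filter, mem_univ, true_and, Sym2.diag, Sym2.map_mk] at ha hzS
    exact hT _ _ _ hzS ha (joinK1_adj_inl_inr a ())
  have hU : (pairGraph G).IsIndepSet ↑(S ∪ A.image Sym2.diag) := by
    have mem_U {c x : V} (h : s(c, x) ∈ S ∪ A.image Sym2.diag) :
        s(.inl c, .inl x) ∈ T ∨ (x = c ∧ s(.inl c, .inr ()) ∈ T) := by
      simp only [S, A, mem_union, mem_filter, mem_univ, true_and, mem_image, Sym2.map_mk,
        Sym2.diag, Sym2.eq_iff] at h
      obtain h | ⟨a, ha, ⟨rfl, rfl⟩ | ⟨rfl, rfl⟩⟩ := h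
      exacts [.inl h, .inr ⟨rfl, ha⟩, .inr ⟨rfl, ha⟩]
    rw [isIndepSet_pairGraph_iff]
    intro c x y hx hy hxy
    rcases mem_U hx with hx | ⟨rfl, hx⟩ <;> rcases mem_U hy with hy | ⟨rfl, hy⟩
    · exact hT _ _ _ hx hy (joinK1_adj_inl_inl.mpr hxy)
    · exact hT _ _ _ hx hy (joinK1_adj_inl_inr _ ())
    · exact hT _ _ _ hx hy (joinK1_adj_inl_inr _ ()).symm
    · exact hxy.ne rfl
  calc (pairGraph (joinK1 G)).indepNum = T.card := hcard.symm
    _ ≤ S.card + A.card + 1 := card_le_card_inl_add_card_spokes_add_one T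
    _ = (S ∪ A.image Sym2.diag).card + 1 := by
      rw [card_union_of_disjoint hdisj, card_image_of_injective _ Sym2.diag_injective]
    _ ≤ _ := Nat.add_le_add_right hU.card_le_indepNum 1

theorem indepNum_pairGraph_joinK1 [Finite V] :
    (pairGraph (joinK1 G)).indepNum = (pairGraph G).indepNum + 1 :=
  indepNum_pairGraph_joinK1_le.antisymm add_one_le_indepNum_pairGraph_joinK1

end Join

lemma sum_range_div_two_add_one (m : ℕ) : ∑ b ∈ range m, (b / 2 + 1) = (m + 1) ^ 2 / 4 := by
  induction m with
  | zero => rfl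
  | succ m ih =>
    rw [sum_range_succ, ih]
    rcases Nat.even_or_odd' m with ⟨j, rfl | rfl⟩ <;> ring_nf <;> omega

section Path

variable {m : ℕ}

lemma pathG_adj {i j : Fin m} : (pathG m).Adj i j ↔ (i : ℕ) + 1 = j ∨ (j : ℕ) + 1 = i := by
  simp only [pathG, SimpleGraph.fromRel_adj, ne_eq, Fin.ext_iff]
  omega

/-- Two distinct pairs with the same code share their larger end and have adjacent smaller ends,
so they are adjacent in `C(P_m)`. -/
def pathPairCode (z : Sym2 (Fin m)) : Σ _ : ℕ, ℕ := ⟨z.sup, z.inf / 2⟩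

def pathPairCodes (m : ℕ) : Finset (Σ _ : ℕ, ℕ) := (range m).sigma fun b => range (b / 2 + 1)

lemma card_pathPairCodes : (pathPairCodes m).card = ∑ b ∈ range m, (b / 2 + 1) := by
  simp [pathPairCodes]

lemma pathPairCode_mem_pathPairCodes (z : Sym2 (Fin m)) : pathPairCode z ∈ pathPairCodes m := by
  have := Sym2.inf_le_sup z
  simp only [pathPairCode, pathPairCodes, mem_sigma, mem_range]
  omega

lemma injOn_pathPairCode {S : Set (Sym2 (Fin m))} (hS : (pairGraph (pathG m)).IsIndepSet S) :
    S.InjOn pathPairCode := by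
  rw [isIndepSet_pairGraph_iff] at hS
  intro z hz w hw h
  simp only [pathPairCode, Sigma.mk.injEq, heq_eq_eq] at h
  have hsup : z.sup = w.sup := Fin.ext h.1
  refine Sym2.inf_eq_inf_and_sup_eq_sup.mp ⟨?_, hsup⟩
  by_contra hne
  rw [← Sym2.mk_inf_sup z, Sym2.eq_swap] at hz
  rw [← Sym2.mk_inf_sup w, Sym2.eq_swap, ← hsup] at hw
  exact hS _ _ _ hz hw (pathG_adj.mpr (by omega))

lemma card_le_of_isIndepSet_pairGraph_pathG {S : Finset (Sym2 (Fin m))}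
    (hS : (pairGraph (pathG m)).IsIndepSet S) : S.card ≤ ∑ b ∈ range m, (b / 2 + 1) := by
  rw [← card_pathPairCodes]
  exact card_le_card_of_injOn _ (fun z _ => pathPairCode_mem_pathPairCodes z)
    (injOn_pathPairCode hS)

lemma inf_mod_two_eq_sup_mod_two_iff {a b : Fin m} :
    (s(a, b).inf : ℕ) % 2 = (s(a, b).sup : ℕ) % 2 ↔ (a : ℕ) % 2 = (b : ℕ) % 2 := by
  rcases le_total a b with h | h <;> simp [h, eq_comm]

def sameParityPairs (m : ℕ) : Finset (Sym2 (Fin m)) :=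
  univ.filter fun z => (z.inf : ℕ) % 2 = (z.sup : ℕ) % 2

lemma isIndepSet_sameParityPairs :
    (pairGraph (pathG m)).IsIndepSet (sameParityPairs m : Set (Sym2 (Fin m))) := by
  rw [isIndepSet_pairGraph_iff]
  intro c x y hx hy hxy
  simp only [sameParityPairs, mem_coe, mem_filter, mem_univ, true_and,
    inf_mod_two_eq_sup_mod_two_iff] at hx hy
  rw [pathG_adj] at hxy
  omega

lemma sum_le_card_sameParityPairs : ∑ b ∈ range m, (b / 2 + 1) ≤ (sameParityPairs m).card := by
  rw [← card_pathPairCodes]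
  refine card_le_card_of_surjOn pathPairCode ?_
  rintro ⟨b, k⟩ hbk
  simp only [pathPairCodes, coe_sigma, Set.mem_sigma_iff, coe_range, Set.mem_Iio] at hbk
  let a : Fin m := ⟨2 * k + b % 2, by omega⟩
  have hab : a ≤ ⟨b, hbk.1⟩ := Fin.mk_le_mk.mpr (by omega)
  refine ⟨s(a, ⟨b, hbk.1⟩), ?_, ?_⟩
  · simp only [sameParityPairs, mem_coe, mem_filter, mem_univ, true_and,
      inf_mod_two_eq_sup_mod_two_iff, a]
    omega
  · simp only [pathPairCode, Sym2.sup_mk, Sym2.inf_mk, sup_of_le_right hab, inf_of_le_left hab,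
      a, Fin.val_mk]
    congr 1
    omega

theorem indepNum_pairGraph_pathG : (pairGraph (pathG m)).indepNum = (m + 1) ^ 2 / 4 := by
  rw [← sum_range_div_two_add_one]
  refine le_antisymm ?_ <|
    sum_le_card_sameParityPairs.trans isIndepSet_sameParityPairs.card_le_indepNum
  obtain ⟨S, hS, hcard⟩ := (pairGraph (pathG m)).exists_isNIndepSet_indepNum
  exact hcard ▸ card_le_of_isIndepSet_pairGraph_pathG hS

end Path

/-- For every `m ≥ 1`, `α(C(F_{m,1})) = α(C(P_m)) + 1`; equivalently, for `m ≥ 3`,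
`α(C(F_{m,1})) = ⌊(m+1)²/4⌋ + 1`. -/
theorem indepNum_pairGraph_fan :
    (∀ m : ℕ, 1 ≤ m →
      indepNum (pairGraph (fanG m)) = indepNum (pairGraph (pathG m)) + 1) ∧
    (∀ m : ℕ, 3 ≤ m →
      indepNum (pairGraph (fanG m)) = (m + 1) ^ 2 / 4 + 1) := by
  have hfan (m : ℕ) :
      indepNum (pairGraph (fanG m)) = indepNum (pairGraph (pathG m)) + 1 := by
    simp only [indepNum_eq_graph_indepNum]
    exact indepNum_pairGraph_joinK1
  refine ⟨fun m _ => hfan m, fun m _ => ?_⟩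
  rw [hfan, indepNum_eq_graph_indepNum, indepNum_pairGraph_pathG]
end

section
/- Let m ≥ 3 and define, for q = 1,…,m, the sets L_q = {{j, m−(q−j)} : 1 ≤ j ≤ q} of 2-multisets of {1,…,m}. If L_q is not an independent set in the pair graph C(C_m), then m = 2q − 1 (with 2 ≤ q ≤ m−1). -/
/-- The set `L_q = {{j, m−(q−j)} : 1 ≤ j ≤ q}` of 2-multisets of the vertices of `C_m`,
written with 0-indexed vertices: `L_q = {{t, m−q+t} : 0 ≤ t < q}`. -/
def Lset (m q : ℕ) : Set (Sym2 (Fin m)) :=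
  {s | ∃ t, t < q ∧ ∃ (h1 : t < m) (h2 : m - q + t < m),
    s = Sym2.mk (⟨t, h1⟩ : Fin m) (⟨m - q + t, h2⟩ : Fin m)}

/-!
Two distinct members `{i, d + i}` and `{j, d + j}` of `L_q`, where `d = m - q`, can only share a
vertex crosswise (`i = d + j` or `j = d + i`), so their remaining vertices lie at distance `2d`.
Adjacency in `C(C_m)` forces these to be neighbours on the cycle, i.e. `2d = 1` or `2d = m - 1`;
parity excludes the first, and the second is `m = 2q - 1`.
-/

theorem pairGraph_adj_iff {V : Type*} {G : SimpleGraph V} {s t : Sym2 V} :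
    (pairGraph G).Adj s t ↔ ∃ a x y, G.Adj x y ∧ s = s(a, x) ∧ t = s(a, y) := by
  rw [pairGraph, SimpleGraph.fromRel_adj]
  constructor
  · rintro ⟨-, h | ⟨a, x, y, hxy, rfl, rfl⟩⟩
    · exact h
    · exact ⟨a, y, x, hxy.symm, rfl, rfl⟩
  · rintro ⟨a, x, y, hxy, rfl, rfl⟩
    exact ⟨fun h => hxy.ne (Sym2.congr_right.mp h), Or.inl ⟨a, x, y, hxy, rfl, rfl⟩⟩

theorem cycleG_adj_iff_of_lt {n : ℕ} {x y : Fin n} (hxy : x < y) :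
    (cycleG n).Adj x y ↔ (y : ℕ) - x = 1 ∨ (y : ℕ) - x = n - 1 := by
  have hy := y.isLt
  rw [Fin.lt_def] at hxy
  simp only [cycleG, SimpleGraph.fromRel_adj, ne_eq, Fin.ext_iff]
  omega

theorem add_two_mul_of_shifted_pairs_share_vertex {d i j a x y : ℕ}
    (hx : s(i, d + i) = s(a, x)) (hy : s(j, d + j) = s(a, y)) (hxy : x ≠ y) :
    x = y + 2 * d ∨ y = x + 2 * d := by
  rw [Sym2.eq_iff] at hx hy
  omega

theorem map_val_of_mem_Lset {m q : ℕ} {s : Sym2 (Fin m)} (hs : s ∈ Lset m q) :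
    ∃ t, s.map Fin.val = s(t, m - q + t) := by
  obtain ⟨t, -, -, -, rfl⟩ := hs
  exact ⟨t, rfl⟩

theorem Lset_not_indep_general (m q : ℕ)
    (h : ¬ (∀ a ∈ Lset m q, ∀ b ∈ Lset m q, ¬ (pairGraph (cycleG m)).Adj a b)) :
    m = 2 * q - 1 ∧ 2 ≤ q ∧ q ≤ m - 1 := by
  push Not at h
  obtain ⟨s, hs, t, ht, hadj⟩ := h
  obtain ⟨a, x, y, hxy, rfl, rfl⟩ := pairGraph_adj_iff.mp hadj
  obtain ⟨i, hi⟩ := map_val_of_mem_Lset hs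
  obtain ⟨j, hj⟩ := map_val_of_mem_Lset ht
  rw [Sym2.map_mk] at hi hj
  have hne : (x : ℕ) ≠ y := Fin.val_injective.ne hxy.ne
  have hcycle : 2 * (m - q) = 1 ∨ 2 * (m - q) = m - 1 := by
    rcases add_two_mul_of_shifted_pairs_share_vertex hi.symm hj.symm hne with hx_far | hy_far
    · have hlt : y < x := Fin.lt_def.mpr (by omega)
      rw [(cycleG m).adj_comm, cycleG_adj_iff_of_lt hlt] at hxy
      omega
    · have hlt : x < y := Fin.lt_def.mpr (by omega)
      rw [cycleG_adj_iff_of_lt hlt] at hxy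
      omega
  omega

/-- If `L_q` (for `1 ≤ q ≤ m`) is not an independent set in the pair graph `C(C_m)`,
then `m = 2q − 1` (and necessarily `2 ≤ q ≤ m − 1`). -/
theorem Lset_not_indep (m q : ℕ) (hm : 3 ≤ m) (hq1 : 1 ≤ q) (hq2 : q ≤ m)
    (h : ¬ (∀ a ∈ Lset m q, ∀ b ∈ Lset m q, ¬ (pairGraph (cycleG m)).Adj a b)) :
    m = 2 * q - 1 ∧ 2 ≤ q ∧ q ≤ m - 1 :=
  Lset_not_indep_general m q h
end
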